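/- arXiv:1710.01645 — 7 statements merged into one kernel-verified Lean document; each statement's English description precedes it below -/
import Mathlib

section
/- If P is a symmetric real n×n matrix with p negative and n−p positive eigenvalues, ε > 0, λ ≥ 0, and A is a real n×n matrix satisfying AᵀP + PA + 2λP ≤ −εI (in the Loewner order), then the matrix A + λI has no eigenvalues on the imaginary axis. -/
open Matrix

/-- If `P` is a real symmetric `n × n` matrix with `p` negative and `n - p` positive
eigenvalues, `ε > 0`, `λ ≥ 0`, and `A` satisfies `AᵀP + PA + 2λP ≤ -εI` in the Loewner
order, then `A + λI` has no eigenvalues on the imaginary axis. -/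
theorem no_imaginary_axis_eigenvalues
    {n p : ℕ} (A P : Matrix (Fin n) (Fin n) ℝ) (hP : P.IsHermitian)
    (hneg : (Finset.univ.filter fun i => hP.eigenvalues i < 0).card = p)
    (hpos : (Finset.univ.filter fun i => 0 < hP.eigenvalues i).card = n - p)
    (ε lam : ℝ) (hε : 0 < ε) (hlam : 0 ≤ lam)
    (hLMI : ∀ x : Fin n → ℝ,
      x ⬝ᵥ (Aᵀ * P + P * A + (2 * lam) • P).mulVec x ≤ -ε * (x ⬝ᵥ x)) :
    ∀ μ ∈ spectrum ℂ ((A + lam • 1).map (Complex.ofReal)), μ.re ≠ 0 := by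
  intro μ hμ hre
  set B : Matrix (Fin n) (Fin n) ℂ := (A + lam • 1).map Complex.ofReal with hB
  have hspec : μ ∈ spectrum ℂ (Matrix.toLinAlgEquiv' B) := by
    rwa [AlgEquiv.spectrum_eq]
  have hev : Module.End.HasEigenvalue (Matrix.toLinAlgEquiv' B) μ :=
    Module.End.HasEigenvalue.of_mem_spectrum hspec
  obtain ⟨v, hv⟩ := hev.exists_hasEigenvector
  have hv0 : v ≠ 0 := hv.right
  have hvB : B.mulVec v = μ • v := by
    have := hv.apply_eq_smul
    simpa [Matrix.toLinAlgEquiv'_apply] using this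
  set M : Matrix (Fin n) (Fin n) ℝ := Aᵀ * P + P * A + (2 * lam) • P with hM
  set Mc : Matrix (Fin n) (Fin n) ℂ := M.map Complex.ofReal with hMc
  set Ac : Matrix (Fin n) (Fin n) ℂ := A.map Complex.ofReal with hAc
  set Pc : Matrix (Fin n) (Fin n) ℂ := P.map Complex.ofReal with hPc
  have hBsplit : B = Ac + (lam : ℂ) • 1 := by
    ext i j
    by_cases h : i = j <;>
      simp [hB, hAc, Matrix.map_apply, Matrix.one_apply, h]
  have hAv : Ac.mulVec v = (μ - (lam : ℂ)) • v := by
    have h1 : Ac.mulVec v + (lam : ℂ) • v = μ • v := by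
      rw [← hvB, hBsplit, Matrix.add_mulVec, Matrix.smul_mulVec, Matrix.one_mulVec]
    rw [sub_smul]
    exact eq_sub_of_add_eq h1
  have hMcsplit : Mc = Acᵀ * Pc + Pc * Ac + (2 * (lam : ℂ)) • Pc := by
    ext i j
    simp only [hMc, hM, hAc, hPc, Matrix.map_apply, Matrix.add_apply, Matrix.mul_apply,
      Matrix.smul_apply, Matrix.transpose_apply, smul_eq_mul]
    push_cast
    ring
  set q : ℂ := star v ⬝ᵥ Pc.mulVec v with hq
  have hstarA : Ac.mulVec (star v) = star (Ac.mulVec v) := by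
    funext i
    simp only [Matrix.mulVec, dotProduct, Pi.star_apply, star_sum, star_mul',
      hAc, Matrix.map_apply, Complex.star_def, Complex.conj_ofReal]
  have hzero : star v ⬝ᵥ Mc.mulVec v = 0 := by
    have e1 : star v ⬝ᵥ (Acᵀ * Pc).mulVec v = (starRingEnd ℂ (μ - (lam : ℂ))) * q := by
      rw [← Matrix.mulVec_mulVec, Matrix.dotProduct_mulVec, Matrix.vecMul_transpose, hstarA,
        hAv, star_smul, smul_dotProduct, hq, smul_eq_mul]
      rfl
    have e2 : star v ⬝ᵥ (Pc * Ac).mulVec v = (μ - (lam : ℂ)) * q := by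
      rw [← Matrix.mulVec_mulVec, hAv, Matrix.mulVec_smul, dotProduct_smul]
      simp [hq]
    have e3 : star v ⬝ᵥ ((2 * (lam : ℂ)) • Pc).mulVec v = (2 * (lam : ℂ)) * q := by
      rw [Matrix.smul_mulVec, dotProduct_smul]
      simp [hq]
    rw [hMcsplit, Matrix.add_mulVec, Matrix.add_mulVec, dotProduct_add,
      dotProduct_add, e1, e2, e3]
    have hconj : starRingEnd ℂ (μ - (lam : ℂ)) = -μ - (lam : ℂ) := by
      have : starRingEnd ℂ μ = -μ := by
        apply Complex.ext <;> simp [hre]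
      rw [map_sub, this, Complex.conj_ofReal]
    rw [hconj]
    ring
  -- real and imaginary part vectors
  set a : Fin n → ℝ := fun i => (v i).re with ha
  set b : Fin n → ℝ := fun i => (v i).im with hb
  have hre_eq : (star v ⬝ᵥ Mc.mulVec v).re = a ⬝ᵥ M.mulVec a + b ⬝ᵥ M.mulVec b := by
    simp only [dotProduct, Matrix.mulVec, Pi.star_apply, Finset.mul_sum]
    rw [Complex.re_sum, ← Finset.sum_add_distrib]
    refine Finset.sum_congr rfl fun i _ => ?_
    rw [Complex.re_sum, ← Finset.sum_add_distrib]
    refine Finset.sum_congr rfl fun j _ => ?_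
    simp only [hMc, Matrix.map_apply, Complex.mul_re, Complex.mul_im, Complex.ofReal_re,
      Complex.ofReal_im, Complex.conj_re, Complex.conj_im, ha, hb, Complex.star_def]
    ring
  have hnorm : a ⬝ᵥ a + b ⬝ᵥ b = ∑ i, Complex.normSq (v i) := by
    simp only [dotProduct, ← Finset.sum_add_distrib]
    exact Finset.sum_congr rfl fun i _ => by simp [Complex.normSq_apply, ha, hb]
  have hpos' : 0 < a ⬝ᵥ a + b ⬝ᵥ b := by
    rw [hnorm]
    obtain ⟨i, hi⟩ := Function.ne_iff.mp hv0
    exact Finset.sum_pos' (fun j _ => Complex.normSq_nonneg _)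
      ⟨i, Finset.mem_univ i, by simpa [Complex.normSq_pos] using hi⟩
  have h1 := hLMI a
  have h2 := hLMI b
  have h0 : (0 : ℝ) = a ⬝ᵥ M.mulVec a + b ⬝ᵥ M.mulVec b := by
    rw [← hre_eq, hzero, Complex.zero_re]
  nlinarith [h1, h2, hpos', hε]
end

section
/- Suppose A satisfies AᵀP + PA + 2λP ≤ −εI with ε > 0 and P symmetric invertible with p negative eigenvalues. Then A + λI has exactly p eigenvalues (counted with algebraic multiplicity) with positive real part and n−p with negative real part. -/
/-!
Work over `ℂ` with `M = A + λI` and `H = P`, and let `q x = re (x* H x)` and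
`S = Mᴴ H + H M`; the hypothesis says that `re (x* S x) < 0` for `x ≠ 0`. For an eigenvector `v`
of `M` with eigenvalue `μ` one has `re (v* S v) = 2 re μ · q v`, so no eigenvalue of `M` lies on
the imaginary axis.

For real `c ≠ 0` with `M + c` invertible, the Cayley transform `T = (M - c)(M + c)⁻¹` satisfies
`q (T x) - q x = -2c · re (y* S y)` with `y = (M + c)⁻¹ x`, so `c · q` increases strictly along
the orbits of `T`. On the generalized eigenspace of `M` for `μ`, `T` has the single eigenvalue
`(μ - c)/(μ + c)`, of modulus `< 1` when `c re μ > 0`; hence the orbits of `T` tend to `0` on the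
sum `V_c` of these generalized eigenspaces, and `c · q < 0` on `V_c ∖ {0}`. A subspace on which
`c · q` is negative definite has dimension at most the number of eigenvalues `λ` of `H` with
`c λ < 0`. Taking `c > 0` and `c < 0` bounds the number of eigenvalues of `M` in each open
half-plane by the number of eigenvalues of `H` of the opposite sign; the former add up to `n` and
the latter to at most `n`, so both bounds are equalities.
-/

open Matrix Polynomial Module Filter Topology Finset

namespace Module.End

variable {𝕜 E : Type*} [NormedField 𝕜] [SeminormedAddCommGroup E] [NormedSpace 𝕜 E]

def stableSubmodule (f : End 𝕜 E) : Submodule 𝕜 E where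
  carrier := {x | Tendsto (fun k => (f ^ k) x) atTop (𝓝 0)}
  add_mem' hx hy := by simpa using hx.add hy
  zero_mem' := by simpa using tendsto_const_nhds
  smul_mem' r x hx := by simpa using hx.const_smul r

theorem mem_stableSubmodule {f : End 𝕜 E} {x : E} :
    x ∈ f.stableSubmodule ↔ Tendsto (fun k => (f ^ k) x) atTop (𝓝 0) :=
  Iff.rfl

theorem exists_norm_pow_apply_le_mul_pow (f : End 𝕜 E) {ν : 𝕜} {ρ : ℝ} (hνρ : ‖ν‖ < ρ)
    {m : ℕ} {x : E} (hx : ((f - ν • 1) ^ m) x = 0) :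
    ∃ C, ∀ k : ℕ, ‖(f ^ k) x‖ ≤ C * ρ ^ k := by
  induction m generalizing x with
  | zero => exact ⟨0, fun k => by simp_all⟩
  | succ m ih =>
    obtain ⟨C, hC⟩ := ih (x := (f - ν • 1) x) (by rwa [← Module.End.mul_apply, ← pow_succ])
    have hC0 : 0 ≤ C := by simpa using (norm_nonneg _).trans (hC 0)
    have hρν : 0 < ρ - ‖ν‖ := sub_pos.2 hνρ
    have hρ : 0 ≤ ρ := (norm_nonneg ν).trans hνρ.le
    -- chosen so that `‖ν‖ * C' + C ≤ C' * ρ`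
    refine ⟨‖x‖ + C / (ρ - ‖ν‖), fun k => ?_⟩
    induction k with
    | zero =>
      rw [pow_zero, pow_zero, mul_one, Module.End.one_apply]
      exact le_add_of_nonneg_right (by positivity)
    | succ k ihk =>
      have hrec : (f ^ (k + 1)) x = ν • (f ^ k) x + (f ^ k) ((f - ν • 1) x) := by
        simp [pow_succ, Module.End.mul_apply]
      calc ‖(f ^ (k + 1)) x‖ ≤ ‖ν‖ * ((‖x‖ + C / (ρ - ‖ν‖)) * ρ ^ k) + C * ρ ^ k := by
            rw [hrec]
            refine (norm_add_le _ _).trans (add_le_add ?_ (hC k))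
            rw [norm_smul]
            exact mul_le_mul_of_nonneg_left ihk (norm_nonneg ν)
        _ ≤ (‖x‖ + C / (ρ - ‖ν‖)) * ρ ^ (k + 1) := by
            have : C = C / (ρ - ‖ν‖) * (ρ - ‖ν‖) := by field_simp
            rw [pow_succ]
            nlinarith [pow_nonneg hρ k, norm_nonneg x, mul_nonneg (norm_nonneg x) hρν.le]

theorem maxGenEigenspace_le_stableSubmodule (f : End 𝕜 E) {ν : 𝕜} (hν : ‖ν‖ < 1) :
    f.maxGenEigenspace ν ≤ f.stableSubmodule := by
  intro x hx
  obtain ⟨m, hm⟩ := (mem_maxGenEigenspace f ν x).1 hx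
  have hρ : ‖ν‖ < (1 + ‖ν‖) / 2 := by linarith
  obtain ⟨C, hC⟩ := f.exists_norm_pow_apply_le_mul_pow hρ hm
  refine squeeze_zero_norm hC ?_
  simpa using (tendsto_pow_atTop_nhds_zero_of_lt_one (by positivity) (by linarith)).const_mul C

end Module.End

theorem lt_zero_of_tendsto_iterate {X : Type*} [TopologicalSpace X] [Zero X] {T : X → X}
    {φ : X → ℝ} (hφ : ContinuousAt φ 0) (hφ0 : φ 0 = 0) (hmono : ∀ y, φ y ≤ φ (T y)) {x : X}
    (hx : φ x < φ (T x)) (hlim : Tendsto (fun k => T^[k] x) atTop (𝓝 0)) : φ x < 0 := by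
  have hge : ∀ k, φ (T x) ≤ φ (T^[k + 1] x) := by
    intro k
    induction k with
    | zero => simp
    | succ k ih => exact ih.trans (by rw [Function.iterate_succ_apply' T (k + 1)]; exact hmono _)
  have hlim' : Tendsto (fun k => φ (T^[k + 1] x)) atTop (𝓝 0) :=
    hφ0 ▸ hφ.tendsto.comp ((tendsto_add_atTop_iff_nat 1).2 hlim)
  linarith [ge_of_tendsto' hlim' hge]

theorem Submodule.finrank_biSup_eq_sum {ι K V : Type*} [DivisionRing K] [AddCommGroup V]
    [Module K V] [FiniteDimensional K V] {E : ι → Submodule K V} (hE : iSupIndep E)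
    (s : Finset ι) : finrank K ↥(⨆ i ∈ s, E i) = ∑ i ∈ s, finrank K (E i) := by
  classical
  induction s using Finset.induction_on with
  | empty => simp
  | insert a s ha ih =>
    have hdisj : Disjoint (E a) (⨆ i ∈ s, E i) := by
      simpa using hE.disjoint_biSup (y := (s : Set ι)) (by simpa using ha)
    rw [Finset.sum_insert ha, ← ih, Finset.iSup_insert, ← finrank_sup_add_finrank_inf_eq,
      hdisj.eq_bot, finrank_bot, add_zero]

theorem Complex.norm_sub_ofReal_div_add_ofReal_lt_one {μ : ℂ} {c : ℝ} (h : 0 < c * μ.re) :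
    ‖(μ - c) / (μ + c)‖ < 1 := by
  have hsq : ‖μ - c‖ ^ 2 < ‖μ + c‖ ^ 2 := by
    simp only [Complex.sq_norm, Complex.normSq_apply, Complex.sub_re, Complex.add_re,
      Complex.sub_im, Complex.add_im, Complex.ofReal_re, Complex.ofReal_im]
    nlinarith
  have hlt := lt_of_pow_lt_pow_left₀ 2 (norm_nonneg _) hsq
  rwa [norm_div, div_lt_one ((norm_nonneg _).trans_lt hlt)]

namespace Matrix

variable {ι : Type*} [Fintype ι]

theorem star_mulVec_dotProduct_mulVec_mulVec {R : Type*} [CommSemiring R] [StarRing R]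
    (B H : Matrix ι ι R) (y : ι → R) :
    star (B *ᵥ y) ⬝ᵥ H *ᵥ (B *ᵥ y) = star y ⬝ᵥ (Bᴴ * H * B) *ᵥ y := by
  rw [star_mulVec, dotProduct_mulVec, dotProduct_mulVec, dotProduct_mulVec, vecMul_vecMul,
    vecMul_vecMul, Matrix.mul_assoc]

theorem re_star_dotProduct_map_algebraMap_mulVec (C : Matrix ι ι ℝ) (x : ι → ℂ) :
    (star x ⬝ᵥ C.map (algebraMap ℝ ℂ) *ᵥ x).re =
      (fun i => (x i).re) ⬝ᵥ C *ᵥ (fun i => (x i).re) +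
        (fun i => (x i).im) ⬝ᵥ C *ᵥ (fun i => (x i).im) := by
  simp only [dotProduct, mulVec, Pi.star_apply, map_apply, Complex.re_sum, Finset.mul_sum,
    ← Finset.sum_add_distrib]
  refine Finset.sum_congr rfl fun i _ => Finset.sum_congr rfl fun j _ => ?_
  simp only [Complex.star_def, Complex.mul_re, Complex.mul_im, Complex.conj_re, Complex.conj_im,
    Complex.coe_algebraMap, Complex.ofReal_re, Complex.ofReal_im]
  ring

theorem re_star_dotProduct_map_algebraMap_mulVec_neg {C : Matrix ι ι ℝ} {ε : ℝ} (hε : 0 < ε)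
    (hC : ∀ x : ι → ℝ, x ⬝ᵥ C *ᵥ x ≤ -ε * (x ⬝ᵥ x)) {x : ι → ℂ} (hx : x ≠ 0) :
    (star x ⬝ᵥ C.map (algebraMap ℝ ℂ) *ᵥ x).re < 0 := by
  set a : ι → ℝ := fun i => (x i).re
  set b : ι → ℝ := fun i => (x i).im
  have hab : a ≠ 0 ∨ b ≠ 0 := by
    by_contra! h
    exact hx (funext fun i => Complex.ext (congrFun h.1 i) (congrFun h.2 i))
  have hsq : ∀ v : ι → ℝ, 0 ≤ v ⬝ᵥ v ∧ (v ≠ 0 → 0 < v ⬝ᵥ v) := fun v =>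
    ⟨by simpa using dotProduct_star_self_nonneg v,
      fun hv => by simpa using dotProduct_star_self_pos_iff.2 hv⟩
  have hpos : 0 < a ⬝ᵥ a + b ⬝ᵥ b := by
    rcases hab with h | h
    · linarith [(hsq a).2 h, (hsq b).1]
    · linarith [(hsq a).1, (hsq b).2 h]
  rw [re_star_dotProduct_map_algebraMap_mulVec]
  nlinarith [hC a, hC b]

theorem re_star_dotProduct_lyapunov_of_mulVec_eq_smul (M H : Matrix ι ι ℂ) {μ : ℂ} {v : ι → ℂ}
    (hv : M *ᵥ v = μ • v) :
    (star v ⬝ᵥ (Mᴴ * H + H * M) *ᵥ v).re = 2 * μ.re * (star v ⬝ᵥ H *ᵥ v).re := by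
  have h : star v ⬝ᵥ (Mᴴ * H + H * M) *ᵥ v = (star μ + μ) * (star v ⬝ᵥ H *ᵥ v) := by
    rw [add_mulVec, dotProduct_add, ← mulVec_mulVec, ← mulVec_mulVec, hv, dotProduct_mulVec,
      ← star_mulVec, hv, mulVec_smul, star_smul]
    simp only [dotProduct_mulVec, smul_vecMul, smul_dotProduct, dotProduct_smul, smul_eq_mul]
    ring
  rw [h, Complex.mul_re]
  simp only [Complex.star_def, Complex.add_re, Complex.add_im, Complex.conj_re, Complex.conj_im]
  ring

variable [DecidableEq ι]

theorem countP_roots_charpoly_eq_finrank {K : Type*} [Field K] [DecidableEq K]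
    (M : Matrix ι ι K) (r : K → Prop) [DecidablePred r] :
    M.charpoly.roots.countP r =
      finrank K ↥(⨆ μ ∈ {μ ∈ M.charpoly.roots.toFinset | r μ},
        End.maxGenEigenspace (toLin' M) μ) := by
  rw [Submodule.finrank_biSup_eq_sum (End.independent_maxGenEigenspace _),
    Multiset.countP_eq_card_filter, ← Multiset.toFinset_sum_count_eq, Multiset.toFinset_filter]
  refine Finset.sum_congr rfl fun μ hμ => ?_
  rw [Multiset.count_filter_of_pos (Finset.mem_filter.1 hμ).2, count_roots,
    LinearMap.finrank_maxGenEigenspace_eq, charpoly_toLin']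

namespace IsHermitian

variable {𝕜 : Type*} [RCLike 𝕜]

theorem re_star_dotProduct_mulVec_eq_sum {H : Matrix ι ι 𝕜} (hH : H.IsHermitian)
    (x : ι → 𝕜) :
    RCLike.re (star x ⬝ᵥ H *ᵥ x) =
      ∑ i, hH.eigenvalues i * ‖(star (hH.eigenvectorUnitary : Matrix ι ι 𝕜) *ᵥ x) i‖ ^ 2 := by
  have hx : star x ⬝ᵥ H *ᵥ x = star (star (hH.eigenvectorUnitary : Matrix ι ι 𝕜) *ᵥ x) ⬝ᵥ
      diagonal (RCLike.ofReal ∘ hH.eigenvalues) *ᵥ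
        (star (hH.eigenvectorUnitary : Matrix ι ι 𝕜) *ᵥ x) := by
    conv_lhs => rw [hH.spectral_theorem, Unitary.conjStarAlgAut_apply]
    rw [star_mulVec_dotProduct_mulVec_mulVec, ← star_eq_conjTranspose, star_star]
  rw [hx, dotProduct, map_sum]
  refine Finset.sum_congr rfl fun i _ => ?_
  simp only [mulVec_diagonal, Pi.star_apply, Function.comp_apply, RCLike.star_def]
  rw [mul_left_comm, RCLike.conj_mul, ← RCLike.ofReal_pow, ← RCLike.ofReal_mul, RCLike.ofReal_re]

theorem finrank_le_card_of_mul_re_neg {H : Matrix ι ι 𝕜} (hH : H.IsHermitian) (s : ℝ)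
    (W : Submodule 𝕜 (ι → 𝕜)) (hW : ∀ x ∈ W, x ≠ 0 → s * RCLike.re (star x ⬝ᵥ H *ᵥ x) < 0) :
    finrank 𝕜 W ≤ #{i | s * hH.eigenvalues i < 0} := by
  set U : Matrix ι ι 𝕜 := (hH.eigenvectorUnitary : Matrix ι ι 𝕜)
  -- the eigencoordinates of `x` along eigenvalues with `s λ < 0`
  let L : (ι → 𝕜) →ₗ[𝕜] ({i // s * hH.eigenvalues i < 0} → 𝕜) :=
    LinearMap.funLeft 𝕜 𝕜 Subtype.val ∘ₗ (star U).mulVecLin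
  have hL : Function.Injective (L ∘ₗ W.subtype) := by
    rw [← LinearMap.ker_eq_bot, Submodule.eq_bot_iff]
    rintro ⟨x, hxW⟩ hLx
    by_contra hx0
    have hzero : ∀ i, s * hH.eigenvalues i < 0 → (star U *ᵥ x) i = 0 := fun i hi =>
      congrFun hLx ⟨i, hi⟩
    refine (hW x hxW (by simpa using hx0)).not_ge ?_
    rw [hH.re_star_dotProduct_mulVec_eq_sum, Finset.mul_sum]
    refine Finset.sum_nonneg fun i _ => ?_
    rcases lt_or_ge (s * hH.eigenvalues i) 0 with hi | hi
    · rw [hzero i hi, norm_zero]; simp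
    · rw [← mul_assoc]; positivity
  simpa [Fintype.card_subtype] using LinearMap.finrank_le_finrank_of_injective hL

theorem eigenvalues_map_algebraMap {P : Matrix ι ι ℝ} (hP : P.IsHermitian)
    (hP' : (P.map (algebraMap ℝ 𝕜)).IsHermitian) :
    univ.val.map hP'.eigenvalues = univ.val.map hP.eigenvalues := by
  apply Multiset.map_injective (RCLike.ofReal_injective (K := 𝕜))
  have h := hP'.roots_charpoly_eq_eigenvalues
  rw [charpoly_map, hP.splits_charpoly.roots_map, hP.roots_charpoly_eq_eigenvalues] at h
  simpa [Multiset.map_map, Function.comp_def] using h.symm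

theorem card_filter_eigenvalues_map_algebraMap {P : Matrix ι ι ℝ} (hP : P.IsHermitian)
    (hP' : (P.map (algebraMap ℝ 𝕜)).IsHermitian) (r : ℝ → Prop) [DecidablePred r] :
    #{i | r (hP'.eigenvalues i)} = #{i | r (hP.eigenvalues i)} := by
  have h := congrArg (Multiset.countP r) (hP.eigenvalues_map_algebraMap hP')
  simpa [Multiset.countP_map, Finset.card_def, Finset.filter_val] using h

end IsHermitian

section Cayley

variable {K : Type*} [Field K]

/-- The Cayley transform `(M - c)(M + c)⁻¹`; it is junk (`(M - c) * 0`) unless `M + c` is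
invertible. -/
noncomputable def cayley (M : Matrix ι ι K) (c : K) : Matrix ι ι K :=
  (M - c • 1) * (M + c • 1)⁻¹

theorem isUnit_det_add_smul_one_of_not_isRoot (M : Matrix ι ι K) {c : K}
    (hc : ¬ M.charpoly.IsRoot (-c)) : IsUnit (M + c • 1).det := by
  rw [isUnit_iff_ne_zero]
  contrapose! hc
  have h : scalar ι (-c) - M = -(M + c • 1) := by
    ext i j; by_cases hij : i = j <;> simp [hij]; ring
  rw [IsRoot, eval_charpoly, h, det_neg, hc, mul_zero]

theorem toLin'_sub_smul_one_pow (M : Matrix ι ι K) (μ : K) (m : ℕ) :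
    (toLin' M - μ • 1) ^ m = toLin' ((M - μ • 1) ^ m) := by
  rw [show toLin' ((M - μ • 1) ^ m) = toLinAlgEquiv' ((M - μ • 1) ^ m) from rfl, map_pow,
    map_sub, map_smul, map_one]
  rfl

theorem maxGenEigenspace_le_maxGenEigenspace_cayley (M : Matrix ι ι K) {c μ : K}
    (hc : IsUnit (M + c • 1).det) (hμ : μ + c ≠ 0) :
    End.maxGenEigenspace (toLin' M) μ ≤
      End.maxGenEigenspace (toLin' (M.cayley c)) ((μ - c) / (μ + c)) := by
  intro x hx
  obtain ⟨m, hm⟩ := (End.mem_maxGenEigenspace _ _ _).1 hx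
  refine (End.mem_maxGenEigenspace _ _ _).2 ⟨m, ?_⟩
  rw [toLin'_sub_smul_one_pow, toLin'_apply] at hm
  rw [toLin'_sub_smul_one_pow]
  set N := M + c • 1
  let := invertibleOfIsUnitDet N hc
  have hcomm : Commute N⁻¹ (M - μ • 1) := by
    rw [← invOf_eq_nonsing_inv]
    refine Commute.invOf_left ?_
    simp only [N, Commute, SemiconjBy, add_mul, mul_add, sub_mul, mul_sub, smul_mul_assoc,
      mul_smul_comm, one_mul, mul_one]
    module
  have hlin : (M - c • 1) - ((μ - c) / (μ + c)) • N = ((2 * c) / (μ + c)) • (M - μ • 1) := by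
    simp only [N]
    match_scalars <;> field_simp <;> ring
  have hcayley : M.cayley c - ((μ - c) / (μ + c)) • 1 =
      ((2 * c) / (μ + c)) • (N⁻¹ * (M - μ • 1)) := by
    calc M.cayley c - ((μ - c) / (μ + c)) • 1
        = ((M - c • 1) - ((μ - c) / (μ + c)) • N) * N⁻¹ := by
          rw [sub_mul, smul_mul_assoc, mul_nonsing_inv N hc]; rfl
      _ = ((2 * c) / (μ + c)) • (N⁻¹ * (M - μ • 1)) := by rw [hlin, smul_mul_assoc, hcomm.eq]
  rw [hcayley, _root_.smul_pow, hcomm.mul_pow, toLin'_apply, smul_mulVec, ← mulVec_mulVec, hm,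
    mulVec_zero, smul_zero]

end Cayley

section Lyapunov

variable (M H : Matrix ι ι ℂ)

theorem conjTranspose_mul_mul_sub_smul_one_sub (c : ℝ) :
    (M - (c : ℂ) • 1)ᴴ * H * (M - (c : ℂ) • 1) - (M + (c : ℂ) • 1)ᴴ * H * (M + (c : ℂ) • 1) =
      (-(2 * c) : ℂ) • (Mᴴ * H + H * M) := by
  simp only [conjTranspose_sub, conjTranspose_add, conjTranspose_smul, conjTranspose_one,
    Complex.star_def, Complex.conj_ofReal, sub_mul, mul_sub, add_mul, mul_add, smul_mul_assoc,
    mul_smul_comm, one_mul, mul_one]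
  module

theorem re_star_dotProduct_sub_smul_one_sub (c : ℝ) (y : ι → ℂ) :
    (star ((M - (c : ℂ) • 1) *ᵥ y) ⬝ᵥ H *ᵥ ((M - (c : ℂ) • 1) *ᵥ y)).re -
        (star ((M + (c : ℂ) • 1) *ᵥ y) ⬝ᵥ H *ᵥ ((M + (c : ℂ) • 1) *ᵥ y)).re =
      -(2 * c) * (star y ⬝ᵥ (Mᴴ * H + H * M) *ᵥ y).re := by
  rw [star_mulVec_dotProduct_mulVec_mulVec, star_mulVec_dotProduct_mulVec_mulVec,
    ← Complex.sub_re, ← dotProduct_sub, ← sub_mulVec, conjTranspose_mul_mul_sub_smul_one_sub,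
    smul_mulVec, dotProduct_smul, smul_eq_mul, ← Complex.ofReal_ofNat, ← Complex.ofReal_mul,
    ← Complex.ofReal_neg, Complex.re_ofReal_mul]

variable {M H}

theorem re_ne_zero_of_mem_roots_charpoly
    (hS : ∀ x ≠ 0, (star x ⬝ᵥ (Mᴴ * H + H * M) *ᵥ x).re < 0) {μ : ℂ}
    (hμ : μ ∈ M.charpoly.roots) : μ.re ≠ 0 := by
  have hroot : End.HasEigenvalue (toLin' M) μ := by
    rw [End.hasEigenvalue_iff_isRoot_charpoly, charpoly_toLin']
    exact isRoot_of_mem_roots hμ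
  obtain ⟨v, hv⟩ := hroot.exists_hasEigenvector
  intro h0
  have := hS v hv.2
  rw [re_star_dotProduct_lyapunov_of_mulVec_eq_smul M H (by simpa using hv.apply_eq_smul), h0]
    at this
  simp at this

theorem biSup_maxGenEigenspace_le_stableSubmodule_cayley {c : ℝ}
    (hc : IsUnit (M + (c : ℂ) • 1).det) (s : Finset ℂ) (hs : ∀ μ ∈ s, 0 < c * μ.re) :
    ⨆ μ ∈ s, End.maxGenEigenspace (toLin' M) μ ≤ End.stableSubmodule (toLin' (M.cayley c)) := by
  refine iSup₂_le fun μ hμ => ?_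
  have hμc : μ + c ≠ 0 := fun h => by
    have hre : μ.re = -c := by
      linear_combination (by simpa using congrArg Complex.re h : μ.re + c = 0)
    have := hs μ hμ
    rw [hre] at this
    nlinarith [sq_nonneg c]
  exact (M.maxGenEigenspace_le_maxGenEigenspace_cayley hc hμc).trans
    (End.maxGenEigenspace_le_stableSubmodule _
      (Complex.norm_sub_ofReal_div_add_ofReal_lt_one (hs μ hμ)))

theorem mul_re_star_dotProduct_neg_of_mem_stableSubmodule
    (hS : ∀ x ≠ 0, (star x ⬝ᵥ (Mᴴ * H + H * M) *ᵥ x).re < 0) {c : ℝ} (hc0 : c ≠ 0)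
    (hc : IsUnit (M + (c : ℂ) • 1).det) {x : ι → ℂ}
    (hx : x ∈ End.stableSubmodule (toLin' (M.cayley c))) (hx0 : x ≠ 0) :
    c * (star x ⬝ᵥ H *ᵥ x).re < 0 := by
  have hS' : ∀ y, (star y ⬝ᵥ (Mᴴ * H + H * M) *ᵥ y).re ≤ 0 := fun y => by
    rcases eq_or_ne y 0 with rfl | hy
    · simp
    · exact (hS y hy).le
  set N := M + (c : ℂ) • 1
  have hstep : ∀ x, c * (star (M.cayley c *ᵥ x) ⬝ᵥ H *ᵥ (M.cayley c *ᵥ x)).re -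
      c * (star x ⬝ᵥ H *ᵥ x).re =
        -(2 * c ^ 2) * (star (N⁻¹ *ᵥ x) ⬝ᵥ (Mᴴ * H + H * M) *ᵥ (N⁻¹ *ᵥ x)).re := by
    intro x
    obtain ⟨y, rfl⟩ : ∃ y, x = N *ᵥ y :=
      ⟨N⁻¹ *ᵥ x, by rw [mulVec_mulVec, mul_nonsing_inv _ hc, one_mulVec]⟩
    have hy : N⁻¹ *ᵥ (N *ᵥ y) = y := by rw [mulVec_mulVec, nonsing_inv_mul _ hc, one_mulVec]
    rw [cayley, ← mulVec_mulVec, hy, ← mul_sub, re_star_dotProduct_sub_smul_one_sub]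
    ring
  refine lt_zero_of_tendsto_iterate (T := toLin' (M.cayley c))
    (φ := fun y => c * (star y ⬝ᵥ H *ᵥ y).re) (by fun_prop) (by simp) (fun y => ?_) ?_ ?_
  · have := hstep y
    simp only [toLin'_apply]
    nlinarith [hS' (N⁻¹ *ᵥ y), sq_nonneg c]
  · have hy : N⁻¹ *ᵥ x ≠ 0 := fun h => hx0 (by
      rw [← one_mulVec x, ← mul_nonsing_inv _ hc, ← mulVec_mulVec, h, mulVec_zero])
    have := hstep x
    simp only [toLin'_apply]
    nlinarith [hS _ hy, pow_pos (abs_pos.2 hc0) 2, sq_abs c]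
  · simpa [End.pow_apply] using End.mem_stableSubmodule.1 hx

theorem countP_roots_charpoly_le_card_eigenvalues (hH : H.IsHermitian)
    (hS : ∀ x ≠ 0, (star x ⬝ᵥ (Mᴴ * H + H * M) *ᵥ x).re < 0) {c : ℝ} (hc0 : c ≠ 0)
    (hc : ¬ M.charpoly.IsRoot (-c)) :
    M.charpoly.roots.countP (fun μ => 0 < c * μ.re) ≤ #{i | c * hH.eigenvalues i < 0} := by
  classical
  have hdet := M.isUnit_det_add_smul_one_of_not_isRoot hc
  rw [countP_roots_charpoly_eq_finrank]
  refine hH.finrank_le_card_of_mul_re_neg c _ fun x hx hx0 => ?_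
  refine mul_re_star_dotProduct_neg_of_mem_stableSubmodule hS hc0 hdet ?_ hx0
  exact biSup_maxGenEigenspace_le_stableSubmodule_cayley hdet _
    (fun μ hμ => (Finset.mem_filter.1 hμ).2) hx

theorem inertia_of_lyapunov (hH : H.IsHermitian)
    (hS : ∀ x ≠ 0, (star x ⬝ᵥ (Mᴴ * H + H * M) *ᵥ x).re < 0) :
    M.charpoly.roots.countP (fun μ => 0 < μ.re) = #{i | hH.eigenvalues i < 0} ∧
      M.charpoly.roots.countP (fun μ => μ.re < 0) = #{i | 0 < hH.eigenvalues i} := by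
  obtain ⟨c, hc : 0 < c, hcroots⟩ := (Set.Ioi_infinite (0 : ℝ)).exists_notMem_finset
    (M.charpoly.roots.toFinset.image norm)
  have hnotRoot : ∀ σ : ℝ, |σ| = c → ¬ M.charpoly.IsRoot (-σ) := fun σ hσ hroot => hcroots <|
    Finset.mem_image.2
      ⟨_, Multiset.mem_toFinset.2 (mem_roots'.2 ⟨M.charpoly_monic.ne_zero, hroot⟩), by simpa⟩
  have hpos : M.charpoly.roots.countP (fun μ => 0 < μ.re) ≤ #{i | hH.eigenvalues i < 0} :=
    calc M.charpoly.roots.countP (fun μ => 0 < μ.re)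
        = M.charpoly.roots.countP (fun μ => 0 < c * μ.re) :=
          Multiset.countP_congr rfl fun μ _ => propext (mul_pos_iff_of_pos_left hc).symm
      _ ≤ #{i | c * hH.eigenvalues i < 0} :=
          countP_roots_charpoly_le_card_eigenvalues hH hS hc.ne' (hnotRoot c (abs_of_pos hc))
      _ = #{i | hH.eigenvalues i < 0} :=
          congrArg _ (filter_congr fun i _ => ⟨fun h => by nlinarith, fun h => by nlinarith⟩)
  have hneg : M.charpoly.roots.countP (fun μ => μ.re < 0) ≤ #{i | 0 < hH.eigenvalues i} :=
    calc M.charpoly.roots.countP (fun μ => μ.re < 0)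
        = M.charpoly.roots.countP (fun μ => 0 < -c * μ.re) :=
          Multiset.countP_congr rfl fun μ _ => propext ⟨fun h => by nlinarith, fun h => by nlinarith⟩
      _ ≤ #{i | -c * hH.eigenvalues i < 0} :=
          countP_roots_charpoly_le_card_eigenvalues hH hS (neg_ne_zero.2 hc.ne')
            (hnotRoot (-c) (by simp [abs_of_pos hc]))
      _ = #{i | 0 < hH.eigenvalues i} :=
          congrArg _ (filter_congr fun i _ => ⟨fun h => by nlinarith, fun h => by nlinarith⟩)
  have hroots : M.charpoly.roots.countP (fun μ => 0 < μ.re) +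
      M.charpoly.roots.countP (fun μ => μ.re < 0) = Fintype.card ι := by
    rw [← M.charpoly_natDegree_eq_dim, ← IsAlgClosed.card_roots_eq_natDegree,
      Multiset.card_eq_countP_add_countP (fun μ => 0 < μ.re)]
    congr 1
    refine Multiset.countP_congr rfl fun μ hμ => propext ⟨fun h => h.not_gt, fun h => ?_⟩
    exact lt_of_le_of_ne (not_lt.1 h) (re_ne_zero_of_mem_roots_charpoly hS hμ)
  have heig : #{i | hH.eigenvalues i < 0} + #{i | 0 < hH.eigenvalues i} ≤ Fintype.card ι := by
    rw [← card_union_of_disjoint (disjoint_filter.2 fun i _ h => h.not_gt)]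
    exact card_le_univ _
  omega

end Lyapunov

end Matrix

theorem inertia_of_shifted_matrix_general
    {n p : ℕ} (A P : Matrix (Fin n) (Fin n) ℝ) (hP : P.IsHermitian)
    (hneg : (Finset.univ.filter fun i => hP.eigenvalues i < 0).card = p)
    (hpos : (Finset.univ.filter fun i => 0 < hP.eigenvalues i).card = n - p)
    (lam ε : ℝ) (hε : 0 < ε)
    (hLMI : ∀ x : Fin n → ℝ,
      x ⬝ᵥ (Aᵀ * P + P * A + (2 * lam) • P).mulVec x ≤ -ε * (x ⬝ᵥ x)) :
    (((A + lam • 1).charpoly.aroots ℂ).countP fun μ => 0 < μ.re) = p ∧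
    (((A + lam • 1).charpoly.aroots ℂ).countP fun μ => μ.re < 0) = n - p := by
  set f := algebraMap ℝ ℂ
  set M := A + lam • 1
  have hP' : (P.map f).IsHermitian := hP.map f fun _ => by simp [f]
  have hlyap : (M.map f)ᴴ * P.map f + P.map f * M.map f =
      (Aᵀ * P + P * A + (2 * lam) • P).map f := by
    have hMt : (M.map f)ᴴ = Mᵀ.map f := by ext; simp [f]
    rw [hMt, ← Matrix.map_mul, ← Matrix.map_mul, ← Matrix.map_add _ (map_add f)]
    congr 1
    simp only [M, transpose_add, transpose_smul, transpose_one, add_mul, mul_add, smul_mul_assoc,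
      mul_smul_comm, one_mul, mul_one]
    module
  have hS := fun x (hx : x ≠ 0) => hlyap ▸ re_star_dotProduct_map_algebraMap_mulVec_neg hε hLMI hx
  obtain ⟨h₁, h₂⟩ := inertia_of_lyapunov hP' hS
  rw [aroots, ← charpoly_map]
  exact ⟨h₁.trans ((hP.card_filter_eigenvalues_map_algebraMap hP' (· < 0)).trans hneg),
    h₂.trans ((hP.card_filter_eigenvalues_map_algebraMap hP' (0 < ·)).trans hpos)⟩

/-- Main inertia theorem for p-dominance: if `AᵀP + PA + 2λP ≤ -εI` with `ε > 0` and
`P` symmetric invertible with `p` negative and `n - p` positive eigenvalues, then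
`A + λI` has exactly `p` eigenvalues (with algebraic multiplicity) with positive real
part and `n - p` with negative real part. -/
theorem inertia_of_shifted_matrix
    {n p : ℕ} (A P : Matrix (Fin n) (Fin n) ℝ) (hP : P.IsHermitian)
    (hneg : (Finset.univ.filter fun i => hP.eigenvalues i < 0).card = p)
    (hpos : (Finset.univ.filter fun i => 0 < hP.eigenvalues i).card = n - p)
    (lam ε : ℝ) (hlam : 0 ≤ lam) (hε : 0 < ε)
    (hLMI : ∀ x : Fin n → ℝ,
      x ⬝ᵥ (Aᵀ * P + P * A + (2 * lam) • P).mulVec x ≤ -ε * (x ⬝ᵥ x)) :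
    (((A + lam • 1).charpoly.aroots ℂ).countP fun μ => 0 < μ.re) = p ∧
    (((A + lam • 1).charpoly.aroots ℂ).countP fun μ => μ.re < 0) = n - p :=
  inertia_of_shifted_matrix_general A P hP hneg hpos lam ε hε hLMI
end

section
/- If a system (A,B,C,D) with D = 0 is strictly p-dissipative with rate λ and supply matrix [[Q,L],[Lᵀ,R]] (i.e., the LMI of p-dissipativity holds with storage matrix P of inertia (p,0,n−p) and ε > 0), and the static nonlinearity φ: ℝ^k → ℝ^m has derivative ∂φ(y) satisfying [I; −∂φ(y)]ᵀ[[Q,L],[Lᵀ,R]][I; −∂φ(y)] ≤ 0 for all y, then the closed-loop Jacobian A_cl(x) := A − B∂φ(Cx)C satisfies A_cl(x)ᵀP + PA_cl(x) + 2λP ≤ −εI for all x. -/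
open Matrix

lemma posSemidef_add' {N : Type*} [Fintype N] {X Y : Matrix N N ℝ}
    (hX : X.PosSemidef) (hY : Y.PosSemidef) : (X + Y).PosSemidef := by
  refine ⟨hX.1.add hY.1, fun x => ?_⟩
  have := add_nonneg (hX.2 x) (hY.2 x)
  simpa only [Matrix.add_apply, mul_add, add_mul, Finsupp.sum_add] using this

/-- If `(A, B, C, 0)` is strictly p-dissipative with rate `λ` and supply
`[[Q, L], [Lᵀ, R]]`, and the static nonlinearity `φ` satisfies the differential
(generalized) sector condition `[I; -∂φ(y)]ᵀ [[Q, L], [Lᵀ, R]] [I; -∂φ(y)] ≤ 0` for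
all `y`, then the closed-loop Jacobian `A_cl(x) = A - B ∂φ(Cx) C` satisfies
`A_cl(x)ᵀ P + P A_cl(x) + 2λP ≤ -εI` for all `x`. -/
theorem closed_loop_dominance
    {n m k p : ℕ} (A : Matrix (Fin n) (Fin n) ℝ) (B : Matrix (Fin n) (Fin m) ℝ)
    (C : Matrix (Fin k) (Fin n) ℝ)
    (P : Matrix (Fin n) (Fin n) ℝ) (Q : Matrix (Fin k) (Fin k) ℝ)
    (L : Matrix (Fin k) (Fin m) ℝ) (R : Matrix (Fin m) (Fin m) ℝ)
    (lam ε : ℝ) (hlam : 0 ≤ lam) (hε : 0 < ε)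
    (hPsym : P.IsHermitian)
    (hinertia : (Finset.univ.filter fun i => hPsym.eigenvalues i < 0).card = p ∧
      (Finset.univ.filter fun i => 0 < hPsym.eigenvalues i).card = n - p)
    (hLMI : (-(Matrix.fromBlocks
        (Aᵀ * P + P * A - Cᵀ * Q * C + (2 * lam) • P + ε • 1)
        (P * B - Cᵀ * L)
        (Bᵀ * P - Lᵀ * C)
        (-R))).PosSemidef)
    (φ : (Fin k → ℝ) → (Fin m → ℝ)) (J : (Fin k → ℝ) → Matrix (Fin m) (Fin k) ℝ)
    (hφ : ∀ y, HasFDerivAt φ ((J y).mulVecLin.toContinuousLinearMap) y)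
    (hsector : ∀ y : Fin k → ℝ,
      (-((Matrix.fromRows (1 : Matrix (Fin k) (Fin k) ℝ) (-(J y)))ᵀ *
          Matrix.fromBlocks Q L Lᵀ R *
          Matrix.fromRows (1 : Matrix (Fin k) (Fin k) ℝ) (-(J y)))).PosSemidef) :
    ∀ x : Fin n → ℝ,
      (-((A - B * J (C.mulVec x) * C)ᵀ * P + P * (A - B * J (C.mulVec x) * C)
          + (2 * lam) • P + ε • 1)).PosSemidef := by
  intro x
  set K : Matrix (Fin m) (Fin k) ℝ := J (C.mulVec x) with hK
  set G : Matrix (Fin n ⊕ Fin m) (Fin n) ℝ := Matrix.fromRows 1 (-(K * C)) with hG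
  have h1 := hLMI.conjTranspose_mul_mul_same G
  have h2 := (hsector (C.mulVec x)).conjTranspose_mul_mul_same C
  have key : -((A - B * K * C)ᵀ * P + P * (A - B * K * C)
          + (2 * lam) • P + ε • 1)
      = Gᴴ * (-(Matrix.fromBlocks
        (Aᵀ * P + P * A - Cᵀ * Q * C + (2 * lam) • P + ε • 1)
        (P * B - Cᵀ * L)
        (Bᵀ * P - Lᵀ * C)
        (-R))) * G
        + Cᴴ * (-((Matrix.fromRows (1 : Matrix (Fin k) (Fin k) ℝ) (-K))ᵀ *
          Matrix.fromBlocks Q L Lᵀ R *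
          Matrix.fromRows (1 : Matrix (Fin k) (Fin k) ℝ) (-K))) * C := by
    rw [hG]
    simp only [conjTranspose_eq_transpose_of_trivial, transpose_fromRows,
      fromCols_mul_fromBlocks, fromCols_mul_fromRows, fromBlocks_mul_fromRows,
      transpose_neg, transpose_mul, transpose_add, transpose_sub, transpose_smul,
      transpose_one, transpose_transpose, Matrix.mul_one, Matrix.one_mul,
      Matrix.neg_mul, Matrix.mul_neg, Matrix.mul_sub, Matrix.sub_mul,
      Matrix.mul_add, Matrix.add_mul, Matrix.smul_mul, Matrix.mul_smul,
      Matrix.mul_assoc, neg_neg, neg_add, neg_sub, sub_eq_add_neg]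
    abel
  rw [key]
  exact posSemidef_add' h1 h2
end

section
/- For the third-order transfer function G(s) = M/((s+β₁)(s+β₂)(s+β₃)) with 0 < β₁ < β₂ < β₃ and M < 0, if β₁ < λ < min{β₂, (β₁+β₂+β₃)/3}, then Re{G(jω − λ)} > 0 for all ω ∈ ℝ. -/
/-- For `G(s) = M/((s+β₁)(s+β₂)(s+β₃))` with `0 < β₁ < β₂ < β₃` and `M < 0`, if
`β₁ < λ < min{β₂, (β₁+β₂+β₃)/3}` then `Re{G(jω - λ)} > 0` for all real `ω`. -/
theorem third_order_one_passive (M β₁ β₂ β₃ lam : ℝ)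
    (hβ₀ : 0 < β₁) (hβ₁ : β₁ < β₂) (hβ₂ : β₂ < β₃) (hM : M < 0)
    (hlo : β₁ < lam) (hhi : lam < min β₂ ((β₁ + β₂ + β₃) / 3)) :
    ∀ ω : ℝ,
      0 < (((M : ℂ) / ((Complex.I * ω - lam + β₁) * (Complex.I * ω - lam + β₂) *
        (Complex.I * ω - lam + β₃)))).re := by
  intro ω
  have hb : lam < β₂ := lt_of_lt_of_le hhi (min_le_left _ _)
  have hs : lam < (β₁ + β₂ + β₃) / 3 := lt_of_lt_of_le hhi (min_le_right _ _)
  set z : ℂ := (Complex.I * ω - lam + β₁) * (Complex.I * ω - lam + β₂) *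
      (Complex.I * ω - lam + β₃) with hzdef
  have hre : z.re = (β₁ - lam) * (β₂ - lam) * (β₃ - lam) -
      ω ^ 2 * ((β₁ - lam) + (β₂ - lam) + (β₃ - lam)) := by
    simp [hzdef, Complex.mul_re, Complex.mul_im]
    ring
  have hreneg : z.re < 0 := by
    rw [hre]
    have h1 : β₁ - lam < 0 := by linarith
    have h2 : 0 < β₂ - lam := by linarith
    have h3 : 0 < β₃ - lam := by linarith
    have h4 : 0 < (β₁ - lam) + (β₂ - lam) + (β₃ - lam) := by linarith
    have h5 : (β₁ - lam) * (β₂ - lam) * (β₃ - lam) < 0 :=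
      mul_neg_of_neg_of_pos (mul_neg_of_neg_of_pos h1 h2) h3
    have h6 : 0 ≤ ω ^ 2 * ((β₁ - lam) + (β₂ - lam) + (β₃ - lam)) :=
      mul_nonneg (sq_nonneg ω) h4.le
    linarith
  have hz : z ≠ 0 := by
    intro h
    have : z.re = 0 := by rw [h]; simp
    linarith
  have hnsq : 0 < Complex.normSq z := Complex.normSq_pos.mpr hz
  have hdiv : ((M : ℂ) / z).re = M * z.re / Complex.normSq z := by
    rw [Complex.div_re]
    simp
  rw [hdiv]
  exact div_pos (by nlinarith) hnsq
end

section
/- For the third-order transfer function G(s) = M/((s+β₁)(s+β₂)(s+β₃)) with 0 < β₁ < β₂ < β₃ and M > 0, if max{β₂, (β₁+β₂+β₃)/3} < λ < β₃, then Re{G(jω − λ)} > 0 for all ω ∈ ℝ. -/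
/-- For `G(s) = M/((s+β₁)(s+β₂)(s+β₃))` with `0 < β₁ < β₂ < β₃` and `M > 0`, if
`max{β₂, (β₁+β₂+β₃)/3} < λ < β₃` then `Re{G(jω - λ)} > 0` for all real `ω`. -/
theorem third_order_two_passive (M β₁ β₂ β₃ lam : ℝ)
    (hβ₀ : 0 < β₁) (hβ₁ : β₁ < β₂) (hβ₂ : β₂ < β₃) (hM : 0 < M)
    (hlo : max β₂ ((β₁ + β₂ + β₃) / 3) < lam) (hhi : lam < β₃) :
    ∀ ω : ℝ,
      0 < (((M : ℂ) / ((Complex.I * ω - lam + β₁) * (Complex.I * ω - lam + β₂) *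
        (Complex.I * ω - lam + β₃)))).re := by
  intro ω
  have h1 : β₂ < lam := lt_of_le_of_lt (le_max_left _ _) hlo
  have h2 : (β₁ + β₂ + β₃) / 3 < lam := lt_of_le_of_lt (le_max_right _ _) hlo
  set z : ℂ := (Complex.I * ω - lam + β₁) * (Complex.I * ω - lam + β₂) *
      (Complex.I * ω - lam + β₃) with hz
  have hre : z.re = (β₁ - lam) * (β₂ - lam) * (β₃ - lam)
      - (β₁ + β₂ + β₃ - 3 * lam) * ω ^ 2 := by
    simp only [hz, Complex.mul_re, Complex.mul_im, Complex.add_re, Complex.add_im,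
      Complex.sub_re, Complex.sub_im, Complex.I_re, Complex.I_im, Complex.ofReal_re,
      Complex.ofReal_im]
    ring
  have hrepos : 0 < z.re := by
    rw [hre]
    nlinarith [sq_nonneg ω, mul_pos (mul_pos (sub_pos.mpr (h1.trans_le' hβ₁.le))
      (sub_pos.mpr h1)) (sub_pos.mpr hhi)]
  have hz0 : z ≠ 0 := fun h => by simp [h] at hrepos
  have hnsq : 0 < Complex.normSq z := Complex.normSq_pos.mpr hz0
  rw [Complex.div_re]
  simp only [Complex.ofReal_re, Complex.ofReal_im, zero_mul, zero_div, add_zero]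
  positivity
end

section
/- If the transfer function of a strictly p-passive SISO system with rate λ satisfies Re{G(jω−λ)} > 0 for all ω, and the relative degree of G is Δ = n − q (poles minus zeros), then Δ ≤ 2p + 1. In particular, for p = 0 (passivity), the relative degree is at most 1. -/
/-!
Substituting `s = I t - λ`, the function `t ↦ num(s) · conj (den(s))`, whose real part is
nonnegative on `ℝ`, becomes `c · ∏ (t - ζ)` for a multiset of complex roots `ζ`: a zero `z` of
`num` gives `ζ = -I (z + λ)` and a pole `w` gives `ζ = I (conj w + λ)`, so unstable zeros and
stable poles land in the open lower half-plane, and zeros on the axis `Re s = -λ` on `ℝ`.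

Along `ℝ`, each non-real root `ζ` turns the argument of `t - ζ` by `π`, clockwise if `ζ` is
below `ℝ`, counterclockwise if above. A nonnegative real part forces `cos` of a continuous
argument to keep its sign between consecutive real roots, so the argument changes by at most
`π` on each of these `#real + 1` intervals. Hence `#lower ≤ #upper + #real + 1`, i.e.
`2 · #lower ≤ n + q + 1`, and `#lower ≥ n - p` gives `n - q ≤ 2p + 1`.
-/

open Filter Topology Real
open Complex (I)

theorem sub_le_pi_of_cos_nonneg {α β : ℝ} (h : ∀ x ∈ Set.Ioo α β, 0 ≤ cos x) :
    β - α ≤ π := by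
  by_contra! hlt
  have hcos_zero : ∀ x, α < x → x + π < β → cos x = 0 := fun x hα hβ => by
    have h₁ := h x ⟨hα, by linarith [pi_pos]⟩
    have h₂ := h (x + π) ⟨by linarith [pi_pos], hβ⟩
    rw [cos_add_pi] at h₂
    linarith
  set δ := min ((β - α - π) / 3) (π / 2)
  have hδ : 0 < δ := lt_min (by linarith) (by positivity)
  have hδ' : δ ≤ (β - α - π) / 3 := min_le_left _ _
  have hδπ : δ < π := (min_le_right _ _).trans_lt (by linarith [pi_pos])
  have h₀ := hcos_zero (α + δ) (by linarith) (by linarith)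
  have h₁ := hcos_zero (α + δ + δ) (by linarith) (by linarith)
  rw [cos_add, h₀, zero_mul, zero_sub, neg_eq_zero] at h₁
  have hsin : sin (α + δ) ≠ 0 := fun hs => by simpa [hs, h₀] using sin_sq_add_cos_sq (α + δ)
  exact mul_ne_zero hsin (sin_pos_of_pos_of_lt_pi hδ hδπ).ne' h₁

theorem abs_sub_le_pi_of_cos_nonneg_on_Ioo {ψ : ℝ → ℝ} {a b : ℝ} (hab : a ≤ b)
    (hψ : ContinuousOn ψ (Set.Icc a b)) (h : ∀ t ∈ Set.Ioo a b, 0 ≤ cos (ψ t)) :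
    |ψ a - ψ b| ≤ π := by
  have hcos : ∀ x ∈ ψ '' Set.Ioo a b, 0 ≤ cos x := by
    rintro _ ⟨t, ht, rfl⟩
    exact h t ht
  rcases le_total (ψ a) (ψ b) with hle | hle
  · rw [abs_sub_comm, abs_of_nonneg (sub_nonneg.2 hle)]
    exact sub_le_pi_of_cos_nonneg fun x hx => hcos x (intermediate_value_Ioo hab hψ hx)
  · rw [abs_of_nonneg (sub_nonneg.2 hle)]
    exact sub_le_pi_of_cos_nonneg fun x hx => hcos x (intermediate_value_Ioo' hab hψ hx)

theorem sub_le_pi_of_tendsto_atBot_of_cos_nonneg {ψ : ℝ → ℝ} (hψ : Continuous ψ) {L b : ℝ}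
    (hL : Tendsto ψ atBot (𝓝 L)) (h : ∀ t < b, 0 ≤ cos (ψ t)) : L - ψ b ≤ π := by
  suffices L ≤ ψ b + π by linarith
  refine le_of_tendsto hL ?_
  filter_upwards [eventually_le_atBot b] with a hab
  have := abs_sub_le_pi_of_cos_nonneg_on_Ioo hab hψ.continuousOn fun t ht => h t ht.2
  linarith [le_abs_self (ψ a - ψ b)]

theorem sub_le_of_prod_mul_cos_nonneg {ψ : ℝ → ℝ} (hψ : Continuous ψ) {L : ℝ}
    (hL : Tendsto ψ atBot (𝓝 L)) (Y : Multiset ℝ) {b : ℝ} (hYb : ∀ y ∈ Y, y ≤ b)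
    (h : ∀ t < b, 0 ≤ (Y.map (t - ·)).prod * cos (ψ t)) :
    L - ψ b ≤ (Multiset.card Y + 1) * π := by
  induction hn : Multiset.card Y generalizing Y ψ L b with
  | zero =>
    obtain rfl := Multiset.card_eq_zero.1 hn
    simpa using sub_le_pi_of_tendsto_atBot_of_cos_nonneg hψ hL (by simpa using h)
  | succ n ih =>
    -- Peel off the largest root `s`: above it the product is positive, below it the sign flip
    -- is absorbed by passing to `ψ + π`.
    obtain ⟨s, hsY, hs_max⟩ : ∃ s ∈ Y, ∀ y ∈ Y, y ≤ s :=
      Multiset.exists_max_image id (by rintro rfl; simp at hn)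
    obtain ⟨Y, rfl⟩ := Multiset.exists_cons_of_mem hsY
    have hpos : ∀ t, s < t → 0 < (Y.map (t - ·)).prod := fun t hst =>
      Multiset.prod_pos fun _ hx => by
        obtain ⟨y, hy, rfl⟩ := Multiset.mem_map.1 hx
        linarith [hs_max y (Multiset.mem_cons_of_mem hy)]
    have htop : ψ s - ψ b ≤ π := by
      refine (le_abs_self _).trans
        (abs_sub_le_pi_of_cos_nonneg_on_Ioo (hYb s hsY) hψ.continuousOn fun t ht => ?_)
      have := h t ht.2
      rw [Multiset.map_cons, Multiset.prod_cons] at this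
      exact (mul_nonneg_iff_of_pos_left (mul_pos (sub_pos.2 ht.1) (hpos t ht.1))).1 this
    have hrest := ih (ψ := fun t => ψ t + π) (hψ.add continuous_const) (hL.add_const π) Y
      (fun y hy => hs_max y (Multiset.mem_cons_of_mem hy)) (fun t hts => by
        have := h t (hts.trans_le (hYb s hsY))
        rw [Multiset.map_cons, Multiset.prod_cons, mul_assoc] at this
        rw [cos_add_pi, mul_neg, neg_nonneg]
        exact nonpos_of_mul_nonneg_right this (sub_neg.2 hts))
      (by simpa using hn)
    push_cast at hrest ⊢
    linarith

theorem sub_le_of_forall_prod_mul_cos_nonneg {ψ : ℝ → ℝ} (hψ : Continuous ψ) {L₁ L₂ : ℝ}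
    (hbot : Tendsto ψ atBot (𝓝 L₁)) (htop : Tendsto ψ atTop (𝓝 L₂)) (Y : Multiset ℝ)
    (h : ∀ t, 0 ≤ (Y.map (t - ·)).prod * cos (ψ t)) :
    L₁ - L₂ ≤ (Multiset.card Y + 1) * π := by
  obtain ⟨b, hb⟩ := Y.toFinset.bddAbove
  suffices L₁ - (Multiset.card Y + 1) * π ≤ L₂ by linarith
  refine ge_of_tendsto htop ?_
  filter_upwards [eventually_ge_atTop b] with c hc
  have := sub_le_of_prod_mul_cos_nonneg hψ hbot Y
    (fun y hy => (hb (by simpa using hy)).trans hc) fun t _ => h t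
  linarith

theorem one_add_mul_I_eq_sqrt_mul_exp (s : ℝ) :
    (1 + s * I : ℂ) = √(1 + s ^ 2) * Complex.exp (arctan s * I) := by
  have hs : (√(1 + s ^ 2) : ℂ) ≠ 0 := Complex.ofReal_ne_zero.2 (by positivity)
  rw [Complex.exp_mul_I, ← Complex.ofReal_cos, ← Complex.ofReal_sin, cos_arctan, sin_arctan]
  push_cast
  field_simp

theorem sub_eq_mul_one_add_mul_I {ζ : ℂ} (hζ : ζ.im ≠ 0) (t : ℝ) :
    (t : ℂ) - ζ = -I * ζ.im * (1 + ((t - ζ.re) / ζ.im : ℝ) * I) := by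
  apply Complex.ext <;> simp; field_simp

theorem tendsto_arctan_sub_div_atTop (a b : ℝ) :
    Tendsto (fun t => arctan ((t - a) / b)) atTop (𝓝 (SignType.sign b * (π / 2))) := by
  have hlin : Tendsto (fun t : ℝ => t - a) atTop atTop :=
    tendsto_atTop_add_const_right _ _ tendsto_id
  rcases lt_trichotomy b 0 with hb | rfl | hb
  · simpa [sign_neg hb, Function.comp_def] using
      (tendsto_arctan_atBot.mono_right nhdsWithin_le_nhds).comp (hlin.atTop_div_const_of_neg hb)
  · simp
  · simpa [sign_pos hb, Function.comp_def] using
      (tendsto_arctan_atTop.mono_right nhdsWithin_le_nhds).comp (hlin.atTop_div_const hb)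

theorem tendsto_arctan_sub_div_atBot (a b : ℝ) :
    Tendsto (fun t => arctan ((t - a) / b)) atBot (𝓝 (-(SignType.sign b * (π / 2)))) := by
  convert (tendsto_arctan_sub_div_atTop (-a) (-b)).comp tendsto_neg_atBot_atTop using 2
  · simp only [Function.comp_apply]
    ring_nf
  · simp [Left.sign_neg]

/-- A continuous argument of `t ↦ ∏ (t - ζ)`, up to a constant, when no `ζ` is real. A real
`ζ` contributes `arctan 0 = 0`, since `x / 0 = 0`. -/
noncomputable def rootPhase (Z : Multiset ℂ) (t : ℝ) : ℝ :=
  (Z.map fun ζ : ℂ => arctan ((t - ζ.re) / ζ.im)).sum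

theorem continuous_rootPhase (Z : Multiset ℂ) : Continuous (rootPhase Z) :=
  continuous_multiset_sum _ fun _ _ => by fun_prop

theorem exists_prod_sub_eq_mul_exp_rootPhase (Z : Multiset ℂ) (hZ : ∀ ζ ∈ Z, ζ.im ≠ 0)
    (t : ℝ) : ∃ r : ℝ, 0 < r ∧ (Z.map ((t : ℂ) - ·)).prod =
      (Z.map (-I * ·.im)).prod * r * Complex.exp (rootPhase Z t * I) := by
  induction Z using Multiset.induction_on with
  | empty => exact ⟨1, one_pos, by simp [rootPhase]⟩
  | cons ζ Z ih =>
    obtain ⟨r, hr, hprod⟩ := ih fun z hz => hZ z (Multiset.mem_cons_of_mem hz)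
    refine ⟨√(1 + ((t - ζ.re) / ζ.im) ^ 2) * r, by positivity, ?_⟩
    simp only [rootPhase, Multiset.map_cons, Multiset.prod_cons, Multiset.sum_cons] at hprod ⊢
    rw [hprod, sub_eq_mul_one_add_mul_I (hZ ζ (Multiset.mem_cons_self ζ Z)),
      one_add_mul_I_eq_sqrt_mul_exp]
    push_cast
    rw [add_mul, Complex.exp_add]
    ring

theorem tendsto_rootPhase_atTop (Z : Multiset ℂ) :
    Tendsto (rootPhase Z) atTop
      (𝓝 ((Z.countP (0 < ·.im) - Z.countP (·.im < 0) : ℝ) * (π / 2))) := by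
  induction Z using Multiset.induction_on with
  | empty =>
    simpa using tendsto_const_nhds.congr fun t => (by simp [rootPhase] : (0 : ℝ) = rootPhase 0 t)
  | cons ζ Z ih =>
    convert (tendsto_arctan_sub_div_atTop ζ.re ζ.im).add ih using 2
    · simp [rootPhase]
    · rcases lt_trichotomy ζ.im 0 with h | h | h
      · simp [h, lt_asymm h, _root_.sign_neg h]
        ring
      · simp [h]
      · simp [h, lt_asymm h, _root_.sign_pos h]
        ring

theorem tendsto_rootPhase_atBot (Z : Multiset ℂ) :
    Tendsto (rootPhase Z) atBot
      (𝓝 (-((Z.countP (0 < ·.im) - Z.countP (·.im < 0) : ℝ) * (π / 2)))) := by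
  induction Z using Multiset.induction_on with
  | empty =>
    simpa using tendsto_const_nhds.congr fun t => (by simp [rootPhase] : (0 : ℝ) = rootPhase 0 t)
  | cons ζ Z ih =>
    convert (tendsto_arctan_sub_div_atBot ζ.re ζ.im).add ih using 2
    · simp [rootPhase]
    · rcases lt_trichotomy ζ.im 0 with h | h | h
      · simp [h, lt_asymm h, _root_.sign_neg h]
        ring
      · simp [h]
      · simp [h, lt_asymm h, _root_.sign_pos h]
        ring

theorem countP_im_neg_le_of_re_nonneg {c : ℂ} (hc : c ≠ 0) (Y : Multiset ℝ) (Z : Multiset ℂ)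
    (hZ : ∀ ζ ∈ Z, ζ.im ≠ 0)
    (h : ∀ t : ℝ, 0 ≤ ((Y.map (t - ·)).prod * (c * (Z.map ((t : ℂ) - ·)).prod)).re) :
    Z.countP (·.im < 0) ≤ Z.countP (0 < ·.im) + Multiset.card Y + 1 := by
  set c' := c * (Z.map (-I * ·.im)).prod
  have hc' : c' ≠ 0 := mul_ne_zero hc <| Multiset.prod_ne_zero fun h0 => by
    obtain ⟨ζ, hζ, h⟩ := Multiset.mem_map.1 h0
    exact hZ ζ hζ (by simpa using h)
  set ψ := fun t => Complex.arg c' + rootPhase Z t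
  have hsign : ∀ t, 0 ≤ (Y.map (t - ·)).prod * cos (ψ t) := by
    intro t
    set S := (Y.map (t - ·)).prod
    obtain ⟨r, hr, hprod⟩ := exists_prod_sub_eq_mul_exp_rootPhase Z hZ t
    have hpolar : (S : ℂ) * (c * (Z.map ((t : ℂ) - ·)).prod)
        = ↑(r * ‖c'‖ * S) * Complex.exp (ψ t * I) := calc
      _ = S * r * (c' * Complex.exp (rootPhase Z t * I)) := by rw [hprod]; ring
      _ = S * r * (‖c'‖ * Complex.exp (Complex.arg c' * I) *
            Complex.exp (rootPhase Z t * I)) := by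
        rw [Complex.norm_mul_exp_arg_mul_I]
      _ = ↑(r * ‖c'‖ * S) * Complex.exp (ψ t * I) := by
        simp only [ψ]
        push_cast
        rw [add_mul, Complex.exp_add]
        ring
    have := h t
    rw [hpolar, Complex.re_ofReal_mul, Complex.exp_ofReal_mul_I_re, mul_assoc] at this
    exact (mul_nonneg_iff_of_pos_left (by positivity)).1 this
  have hwind := sub_le_of_forall_prod_mul_cos_nonneg
    (continuous_const.add (continuous_rootPhase Z))
    ((tendsto_rootPhase_atBot Z).const_add _) ((tendsto_rootPhase_atTop Z).const_add _) Y hsign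
  have : (Z.countP (·.im < 0) : ℝ) ≤ Z.countP (0 < ·.im) + Multiset.card Y + 1 := by
    nlinarith [pi_pos]
  exact_mod_cast this

theorem two_mul_countP_im_neg_le_of_re_nonneg {c : ℂ} (hc : c ≠ 0) (Z : Multiset ℂ)
    (h : ∀ t : ℝ, 0 ≤ (c * (Z.map ((t : ℂ) - ·)).prod).re) :
    2 * Z.countP (·.im < 0) ≤ Multiset.card Z + 1 := by
  set Z₀ := Z.filter (·.im = 0)
  set Z₁ := Z.filter (¬·.im = 0)
  have hZ : Z₀ + Z₁ = Z := Multiset.filter_add_not _ Z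
  have hZ₁ : ∀ ζ ∈ Z₁, ζ.im ≠ 0 := fun ζ hζ => (Multiset.mem_filter.1 hζ).2
  have hreal : ∀ t : ℝ,
      (((Z₀.map Complex.re).map (t - ·)).prod : ℝ) = (Z₀.map ((t : ℂ) - ·)).prod := by
    intro t
    rw [← Complex.ofRealHom_eq_coe, map_multiset_prod, Multiset.map_map, Multiset.map_map]
    refine congrArg _ (Multiset.map_congr rfl fun ζ hζ => ?_)
    apply Complex.ext <;> simp [(Multiset.mem_filter.1 hζ).2]
  have key := countP_im_neg_le_of_re_nonneg hc (Z₀.map Complex.re) Z₁ hZ₁ fun t => by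
    rw [hreal, mul_left_comm, ← Multiset.prod_add, ← Multiset.map_add, hZ]
    exact h t
  have hneg : Z.countP (·.im < 0) = Z₁.countP (·.im < 0) := by
    rw [← hZ, Multiset.countP_add, Multiset.countP_eq_zero.2 fun ζ hζ => by
      simp [(Multiset.mem_filter.1 hζ).2], zero_add]
  have hcard₁ : Multiset.card Z₁ = Z₁.countP (·.im < 0) + Z₁.countP (0 < ·.im) := by
    rw [Multiset.card_eq_countP_add_countP (·.im < 0)]
    congr 1
    exact Multiset.countP_congr rfl fun ζ hζ =>
      propext ⟨fun h => (not_lt.1 h).lt_of_ne' (hZ₁ ζ hζ), fun h => lt_asymm h⟩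
  have hcard : Multiset.card Z = Multiset.card Z₀ + Multiset.card Z₁ := by
    rw [← hZ, Multiset.card_add]
  rw [Multiset.card_map] at key
  omega

open Polynomial

theorem re_mul_conj_nonneg_of_re_div_nonneg {a b : ℂ} (h : 0 ≤ (a / b).re) :
    0 ≤ (a * (starRingEnd ℂ) b).re := by
  rcases eq_or_ne b 0 with rfl | hb
  · simp
  have : a * (starRingEnd ℂ) b = a / b * (Complex.normSq b : ℝ) := by
    rw [← Complex.mul_conj, ← mul_assoc, div_mul_cancel₀ a hb]
  rw [this, Complex.re_mul_ofReal]
  exact mul_nonneg h (Complex.normSq_nonneg b)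

theorem aeval_I_mul_sub_eq_prod (q : ℝ[X]) (lam t : ℝ) :
    aeval (I * t - lam) q = q.leadingCoeff * I ^ q.natDegree *
      (((q.aroots ℂ).map fun z => -I * (z + lam)).map ((t : ℂ) - ·)).prod := by
  have hfactor : ∀ z : ℂ, I * t - lam - z = I * (t - -I * (z + lam)) := fun z => by
    linear_combination (-(z + lam)) * Complex.I_sq
  rw [(IsAlgClosed.splits _).aeval_eq_prod_aroots, Multiset.map_congr rfl fun z _ => hfactor z,
    Multiset.prod_map_mul, Multiset.map_const', Multiset.prod_replicate,
    IsAlgClosed.card_aroots_eq_natDegree, Multiset.map_map, mul_assoc]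
  rfl

theorem relative_degree_of_p_passive_general
    (num den : Polynomial ℝ) (hnum : num ≠ 0) (hden : den ≠ 0)
    (lam : ℝ) (p : ℕ)
    (hpoles : ((den.aroots ℂ).countP fun z => -lam < z.re) = p)
    (haxis : ∀ z ∈ den.aroots ℂ, z.re ≠ -lam)
    (hpr : ∀ ω : ℝ,
      0 ≤ ((Polynomial.aeval (Complex.I * ω - lam) num) /
            (Polynomial.aeval (Complex.I * ω - lam) den)).re) :
    den.natDegree - num.natDegree ≤ 2 * p + 1 := by
  classical
  set root : ℂ → ℂ := fun z => -I * (z + lam)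
  set Z := (num.aroots ℂ).map root + ((den.aroots ℂ).map root).map (starRingEnd ℂ)
  set c : ℂ := num.leadingCoeff * I ^ num.natDegree *
    (starRingEnd ℂ) (den.leadingCoeff * I ^ den.natDegree)
  have hc : c ≠ 0 := by simp [c, hnum, hden]
  have hfactor : ∀ t : ℝ, aeval (I * t - lam) num * (starRingEnd ℂ) (aeval (I * t - lam) den)
      = c * (Z.map ((t : ℂ) - ·)).prod := by
    intro t
    simp only [aeval_I_mul_sub_eq_prod, Z, c, root, Multiset.map_add, Multiset.prod_add, map_mul,
      map_multiset_prod, Multiset.map_map, Function.comp_def, map_sub, Complex.conj_ofReal]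
    ring
  have hbound := two_mul_countP_im_neg_le_of_re_nonneg hc Z fun t =>
    hfactor t ▸ re_mul_conj_nonneg_of_re_div_nonneg (hpr t)
  have hcard : Multiset.card Z = num.natDegree + den.natDegree := by
    simp [Z, IsAlgClosed.card_aroots_eq_natDegree]
  have hstable : (den.aroots ℂ).countP (·.re < -lam) + p = den.natDegree := by
    rw [← hpoles, ← IsAlgClosed.card_aroots_eq_natDegree (B := ℂ),
      Multiset.card_eq_countP_add_countP (·.re < -lam)]
    congr 1
    exact Multiset.countP_congr rfl fun w hw =>
      propext ⟨fun h => lt_asymm h, fun h => (not_lt.1 h).lt_of_ne' (haxis w hw)⟩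
  have hneg : (den.aroots ℂ).countP (·.re < -lam) ≤ Z.countP (·.im < 0) := by
    simp [Z, root, Multiset.countP_map, Multiset.countP_add, ← Multiset.countP_eq_card_filter,
      ← lt_neg_iff_add_neg]
  omega

/-- Relative degree bound for strictly p-passive SISO systems: if `G = num/den` is a
real rational transfer function such that `G(s - λ)` has exactly `p` poles in the open
right half-plane, none on the imaginary axis, and `Re G(jω - λ) ≥ 0` for all `ω`, then
the relative degree `Δ = deg den - deg num` satisfies `Δ ≤ 2p + 1`. -/
theorem relative_degree_of_p_passive
    (num den : Polynomial ℝ) (hnum : num ≠ 0) (hden : den ≠ 0)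
    (hdeg : num.natDegree ≤ den.natDegree) (hcop : IsCoprime num den)
    (lam : ℝ) (hlam : 0 ≤ lam) (p : ℕ)
    (hpoles : ((den.aroots ℂ).countP fun z => -lam < z.re) = p)
    (haxis : ∀ z ∈ den.aroots ℂ, z.re ≠ -lam)
    (hpr : ∀ ω : ℝ,
      0 ≤ ((Polynomial.aeval (Complex.I * ω - lam) num) /
            (Polynomial.aeval (Complex.I * ω - lam) den)).re) :
    den.natDegree - num.natDegree ≤ 2 * p + 1 :=
  relative_degree_of_p_passive_general num den hnum hden lam p hpoles haxis hpr
end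

section
/- Positive-real preservation under shift for p-passive systems: if the LMI [[AᵀP + PA + 2λP + εI, PB − Cᵀ],[BᵀP − C, −D − Dᵀ]] ≤ 0 holds with P symmetric invertible and ε ≥ 0, then G(jω−λ) + G(jω−λ)* ≥ 0 for all real ω with jωI − (A+λI) invertible, where G(s) = C(sI−A)⁻¹B + D. -/
/-!
Put `s = jω - λ`, `K = (sI - A)⁻¹B` and `T = [K; I]`, so that `G(s) = CK + D` and `AK = sK - B`.
Congruence by `T` of the LMI matrix `W` eliminates `A`: because `s + s̄ = -2λ`, the `P`-terms
cancel and `Tᴴ W T = ε KᴴK - (G + Gᴴ)`. Hence `G + Gᴴ = ε KᴴK + Tᴴ(-W)T` is positive semidefinite.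
-/

open Matrix ComplexOrder

namespace Matrix

section CommRing

variable {R n m : Type*} [CommRing R] [Fintype n]

theorem mul_resolvent_mul [DecidableEq n] {A : Matrix n n R} (B : Matrix n m R) {s : R}
    (hA : IsUnit (s • 1 - A)) :
    A * ((s • 1 - A)⁻¹ * B) = s • ((s • 1 - A)⁻¹ * B) - B := by
  have hinv : (s • 1 - A) * (s • 1 - A)⁻¹ = 1 :=
    mul_nonsing_inv _ ((isUnit_iff_isUnit_det _).mp hA)
  calc A * ((s • 1 - A)⁻¹ * B)
      = (s • 1 - (s • 1 - A)) * ((s • 1 - A)⁻¹ * B) := by rw [sub_sub_cancel]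
    _ = s • ((s • 1 - A)⁻¹ * B) - B := by
      rw [Matrix.sub_mul, ← Matrix.mul_assoc (s • 1 - A), hinv, Matrix.one_mul, Matrix.smul_mul,
        Matrix.one_mul]

variable [Fintype m] [StarRing R] [DecidableEq m]
variable {A P E : Matrix n n R} {B : Matrix n m R} {C : Matrix m n R} {D : Matrix m m R}
  {K : Matrix n m R} {s c : R}

theorem conjTranspose_fromRows_mul_fromBlocks_mul_fromRows (hK : A * K = s • K - B)
    (hs : star s + s = -c) :
    (fromRows K (1 : Matrix m m R))ᴴ *
        fromBlocks (Aᴴ * P + P * A + c • P + E) (P * B - Cᴴ) (Bᴴ * P - C) (-D - Dᴴ) *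
        fromRows K (1 : Matrix m m R) =
      Kᴴ * E * K - (C * K + D + (C * K + D)ᴴ) := by
  obtain rfl : c = -(star s + s) := by rw [hs, neg_neg]
  have hKA : Kᴴ * Aᴴ = star s • Kᴴ - Bᴴ := by
    rw [← conjTranspose_mul, hK, conjTranspose_sub, conjTranspose_smul]
  have hAK : Kᴴ * P * A * K = s • (Kᴴ * P * K) - Kᴴ * P * B := by
    rw [Matrix.mul_assoc, hK, Matrix.mul_sub, Matrix.mul_smul]
  rw [conjTranspose_fromRows_eq_fromCols_conjTranspose, conjTranspose_one,
    fromCols_mul_fromBlocks, fromCols_mul_fromRows]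
  simp only [Matrix.mul_add, Matrix.add_mul, Matrix.mul_sub, Matrix.sub_mul, Matrix.mul_one,
    Matrix.one_mul, Matrix.smul_mul, Matrix.mul_smul, Matrix.mul_neg, Matrix.neg_mul,
    conjTranspose_add, conjTranspose_mul, ← Matrix.mul_assoc, hKA, hAK, neg_smul, add_smul]
  abel

theorem posSemidef_add_conjTranspose_of_lmi [PartialOrder R] [StarOrderedRing R]
    (hLMI : (-fromBlocks (Aᴴ * P + P * A + c • P + E) (P * B - Cᴴ) (Bᴴ * P - C)
      (-D - Dᴴ)).PosSemidef)
    (hE : E.PosSemidef) (hK : A * K = s • K - B) (hs : star s + s = -c) :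
    (C * K + D + (C * K + D)ᴴ).PosSemidef := by
  have hsplit : C * K + D + (C * K + D)ᴴ = Kᴴ * E * K +
      (fromRows K (1 : Matrix m m R))ᴴ *
        -fromBlocks (Aᴴ * P + P * A + c • P + E) (P * B - Cᴴ) (Bᴴ * P - C) (-D - Dᴴ) *
        fromRows K (1 : Matrix m m R) := by
    rw [Matrix.mul_neg, Matrix.neg_mul, conjTranspose_fromRows_mul_fromBlocks_mul_fromRows hK hs]
    abel
  rw [hsplit]
  exact (hE.conjTranspose_mul_mul_same K).add (hLMI.conjTranspose_mul_mul_same _)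

end CommRing

section Real

variable {n m : Type*} [Fintype n]

theorem PosSemidef.map_ofReal {M : Matrix n n ℝ} (hM : M.PosSemidef) :
    (M.map Complex.ofReal).PosSemidef := by
  classical
  open scoped MatrixOrder in
  obtain ⟨L, rfl⟩ := CStarAlgebra.nonneg_iff_eq_star_mul_self.mp hM.nonneg
  have hmap : (star L * L).map Complex.ofReal =
      (L.map Complex.ofReal)ᴴ * L.map Complex.ofReal := by
    ext i j
    simp [mul_apply]
  rw [hmap]
  exact posSemidef_conjTranspose_mul_self _

theorem fromBlocks_lmi_map_ofReal (A P E : Matrix n n ℝ) (B : Matrix n m ℝ) (C : Matrix m n ℝ)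
    (D : Matrix m m ℝ) (c : ℝ) :
    (fromBlocks (Aᵀ * P + P * A + c • P + E) (P * B - Cᵀ) (Bᵀ * P - C) (-D - Dᵀ)).map
        Complex.ofReal =
      fromBlocks
        ((A.map Complex.ofReal)ᴴ * P.map Complex.ofReal +
          P.map Complex.ofReal * A.map Complex.ofReal +
          (c : ℂ) • P.map Complex.ofReal + E.map Complex.ofReal)
        (P.map Complex.ofReal * B.map Complex.ofReal - (C.map Complex.ofReal)ᴴ)
        ((B.map Complex.ofReal)ᴴ * P.map Complex.ofReal - C.map Complex.ofReal)
        (-D.map Complex.ofReal - (D.map Complex.ofReal)ᴴ) := by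
  ext (i | i) (j | j) <;> simp [mul_apply]

end Real

end Matrix

theorem shifted_positive_real_general
    {n m : ℕ} (A : Matrix (Fin n) (Fin n) ℝ) (B : Matrix (Fin n) (Fin m) ℝ)
    (C : Matrix (Fin m) (Fin n) ℝ) (D : Matrix (Fin m) (Fin m) ℝ)
    (P : Matrix (Fin n) (Fin n) ℝ)
    (lam ε : ℝ) (hε : 0 ≤ ε)
    (hLMI : (-(Matrix.fromBlocks
        (Aᵀ * P + P * A + (2 * lam) • P + ε • 1)
        (P * B - Cᵀ)
        (Bᵀ * P - C)
        (-D - Dᵀ))).PosSemidef) :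
    ∀ ω : ℝ,
      IsUnit ((Complex.I * ω) • (1 : Matrix (Fin n) (Fin n) ℂ)
          - (A + lam • 1).map Complex.ofReal) →
      ∀ G : Matrix (Fin m) (Fin m) ℂ,
        G = C.map Complex.ofReal *
              ((Complex.I * ω - lam) • (1 : Matrix (Fin n) (Fin n) ℂ)
                - A.map Complex.ofReal)⁻¹ * B.map Complex.ofReal
            + D.map Complex.ofReal →
        (G + Gᴴ).PosSemidef := by
  intro ω hunit G hG
  set s : ℂ := Complex.I * ω - lam
  have hshift : (Complex.I * ω) • (1 : Matrix (Fin n) (Fin n) ℂ)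
      - (A + lam • 1).map Complex.ofReal = s • 1 - A.map Complex.ofReal := by
    ext i j
    by_cases hij : i = j <;> simp [s, one_apply, hij]
    ring
  have hs : star s + s = -((2 * lam : ℝ) : ℂ) := by
    simp [s, Complex.ext_iff]
    ring
  have hLMIc := hLMI.map_ofReal
  rw [Matrix.map_neg _ Complex.ofReal_neg, fromBlocks_lmi_map_ofReal] at hLMIc
  rw [hG, Matrix.mul_assoc]
  exact posSemidef_add_conjTranspose_of_lmi hLMIc (PosSemidef.one.smul hε).map_ofReal
    (mul_resolvent_mul _ (hshift ▸ hunit)) hs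

/-- Positive-real preservation under shift for p-passive systems: if the LMI
`[[AᵀP + PA + 2λP + εI, PB - Cᵀ], [BᵀP - C, -D - Dᵀ]] ≤ 0` holds with `P` symmetric
invertible, then `G(jω - λ) + G(jω - λ)* ≥ 0` for every real `ω` with
`jωI - (A + λI)` invertible, where `G(s) = C(sI - A)⁻¹B + D`. -/
theorem shifted_positive_real
    {n m : ℕ} (A : Matrix (Fin n) (Fin n) ℝ) (B : Matrix (Fin n) (Fin m) ℝ)
    (C : Matrix (Fin m) (Fin n) ℝ) (D : Matrix (Fin m) (Fin m) ℝ)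
    (P : Matrix (Fin n) (Fin n) ℝ) (hPsym : P.IsHermitian) (hPinv : IsUnit P)
    (lam ε : ℝ) (hlam : 0 ≤ lam) (hε : 0 ≤ ε)
    (hLMI : (-(Matrix.fromBlocks
        (Aᵀ * P + P * A + (2 * lam) • P + ε • 1)
        (P * B - Cᵀ)
        (Bᵀ * P - C)
        (-D - Dᵀ))).PosSemidef) :
    ∀ ω : ℝ,
      IsUnit ((Complex.I * ω) • (1 : Matrix (Fin n) (Fin n) ℂ)
          - (A + lam • 1).map Complex.ofReal) →
      ∀ G : Matrix (Fin m) (Fin m) ℂ,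
        G = C.map Complex.ofReal *
              ((Complex.I * ω - lam) • (1 : Matrix (Fin n) (Fin n) ℂ)
                - A.map Complex.ofReal)⁻¹ * B.map Complex.ofReal
            + D.map Complex.ofReal →
        (G + Gᴴ).PosSemidef :=
  shifted_positive_real_general A B C D P lam ε hε hLMI
end
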